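/- Let G = (X, +, ≤) be an ordered group, let K(G) := {x ∈ X : x ≤_pred 0 and 0 ≤_pred x} (a normal subgroup of G), and let I(G)(0) be the connected component of 0 in the incomparability graph of (X, ≤). The following are equivalent: (i) the order ≤ is a semiorder; (ii) the quotient group I(G)(0)/K(G), equipped with the image of ≤ under the quotient map, is a threshold group; (iii) the quotient group G/K(G), equipped with the image of ≤ under the quotient map, is a threshold group. (The image order on a quotient by a normal convex subgroup H is: α ≤_H β iff a ≤ b for some a ∈ α, b ∈ β.) -/

import Mathlib

namespace ThrPaper

universe u

variable {X : Type*}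

/-- The strict order associated to a reflexive relation `le`. -/
def Lt (le : X → X → Prop) (x y : X) : Prop := le x y ∧ ¬ le y x

/-- `x` and `y` are incomparable with respect to `le`. -/
def Incomp (le : X → X → Prop) (x y : X) : Prop := ¬ le x y ∧ ¬ le y x

/-- `le` is a partial order (reflexive, transitive, antisymmetric). -/
def IsPartialOrderRel (le : X → X → Prop) : Prop :=
  (∀ x, le x x) ∧ (∀ x y z, le x y → le y z → le x z) ∧ ∀ x y, le x y → le y x → x = y

/-- `le` is total. -/
def IsTotalRel (le : X → X → Prop) : Prop := ∀ x y, le x y ∨ le y x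

/-- Compatibility of a relation with the (not necessarily abelian) group operation. -/
def IsCompat {G : Type*} [AddGroup G] (le : G → G → Prop) : Prop :=
  ∀ a b x y : G, le x y → le (a + x + b) (a + y + b)

/-- The trace quasi-order `≤_pred`: `x ≤_pred y` iff every `z < x` satisfies `z < y`. -/
def PredLe (le : X → X → Prop) (x y : X) : Prop := ∀ z, Lt le z x → Lt le z y

/-- The trace quasi-order `≤_succ`: `x ≤_succ y` iff every `z > y` satisfies `z > x`. -/
def SuccLe (le : X → X → Prop) (x y : X) : Prop := ∀ z, Lt le y z → Lt le x z

/-- `le` is a threshold order: `≤_pred` and `≤_succ` are equal and are total orders. -/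
def IsThresholdOrder (le : X → X → Prop) : Prop :=
  (∀ x y, PredLe le x y ↔ SuccLe le x y) ∧
  (∀ x y, PredLe le x y ∨ PredLe le y x) ∧
  ∀ x y, PredLe le x y → PredLe le y x → x = y

/-- The poset `2 ⊕ 2` embeds into `le`. -/
def Embeds2p2 (le : X → X → Prop) : Prop :=
  ∃ a b c d : X, Lt le a b ∧ Lt le c d ∧
    Incomp le a c ∧ Incomp le a d ∧ Incomp le b c ∧ Incomp le b d

/-- The poset `3 ⊕ 1` embeds into `le`. -/
def Embeds3p1 (le : X → X → Prop) : Prop :=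
  ∃ a b c d : X, Lt le a b ∧ Lt le b c ∧ Incomp le d a ∧ Incomp le d b ∧ Incomp le d c

/-- The poset `1 ⊕ 2` embeds into `le`. -/
def Embeds1p2 (le : X → X → Prop) : Prop :=
  ∃ a b c : X, Lt le a b ∧ Incomp le c a ∧ Incomp le c b

/-- The image of a relation `r` on a group `H` under the quotient map `H → H ⧸ K`:
`α ≤ β` iff `a ≤ b` for some representatives `a ∈ α`, `b ∈ β`. -/
def imageRel {H : Type*} [AddGroup H] (K : AddSubgroup H) (r : H → H → Prop) :
    H ⧸ K → H ⧸ K → Prop := fun α β =>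
  ∃ a b : H, (QuotientAddGroup.mk a : H ⧸ K) = α ∧ (QuotientAddGroup.mk b : H ⧸ K) = β ∧ r a b

/-- An ordered group whose order is a threshold order. -/
def IsThresholdGroup (G : Type*) [AddGroup G] (le : G → G → Prop) : Prop :=
  IsPartialOrderRel le ∧ IsCompat le ∧ IsThresholdOrder le

/-!
In an ordered group `≤_pred` and `≤_succ` coincide, and for such a partial order excluding
`2 ⊕ 2` and `3 ⊕ 1` amounts to totality of `≤_pred`. The trace equivalence is the coset
relation of `K(G)`, so on `G ⧸ K(G)` the image order is `<` together with trace equivalence;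
its trace is the image of `≤_pred`, now antisymmetric, and `G ⧸ K(G)` is a threshold group iff
`≤_pred` is total. The same argument applies to the ordered group `I(G)(0)`: a `2 ⊕ 2` or
`3 ⊕ 1` can be translated into the component of `0`, and inside a union of incomparability
components the trace is already determined by the predecessors lying in it.
-/

def PredEquiv (le : X → X → Prop) (x y : X) : Prop := PredLe le x y ∧ PredLe le y x

section Relation

variable {le : X → X → Prop}

theorem lt_irrefl_rel (x : X) : ¬ Lt le x x := fun h => h.2 h.1

theorem Incomp.symm {x y : X} (h : Incomp le x y) : Incomp le y x := ⟨h.2, h.1⟩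

theorem lt_of_lt_of_le_rel (htrans : ∀ x y z, le x y → le y z → le x z) {x y z : X}
    (hxy : Lt le x y) (hyz : le y z) : Lt le x z :=
  ⟨htrans _ _ _ hxy.1 hyz, fun hzx => hxy.2 (htrans _ _ _ hyz hzx)⟩

theorem lt_of_le_of_lt_rel (htrans : ∀ x y z, le x y → le y z → le x z) {x y z : X}
    (hxy : le x y) (hyz : Lt le y z) : Lt le x z :=
  ⟨htrans _ _ _ hxy hyz.1, fun hzx => hyz.2 (htrans _ _ _ hzx hxy)⟩

/-- Witnesses `a < x`, `a ≮ y` and `c < y`, `c ≮ x` of incomparability of `x` and `y` under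
`≤_pred` form a `2 ⊕ 2`. -/
theorem predLe_total_of_not_embeds2p2 (htrans : ∀ x y z, le x y → le y z → le x z)
    (h : ¬ Embeds2p2 le) (x y : X) :
    PredLe le x y ∨ PredLe le y x := by
  by_contra! hxy
  simp only [PredLe, not_forall] at hxy
  obtain ⟨⟨a, hax, hay⟩, ⟨c, hcy, hcx⟩⟩ := hxy
  have hya : ¬ le y a := fun hle =>
    hcx (lt_of_lt_of_le_rel htrans (lt_of_lt_of_le_rel htrans hcy hle) hax.1)
  have hxc : ¬ le x c := fun hle =>
    hay (lt_of_lt_of_le_rel htrans (lt_of_lt_of_le_rel htrans hax hle) hcy.1)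
  refine h ⟨a, x, c, y, hax, hcy, ?_, ⟨fun hle => hay ⟨hle, hya⟩, hya⟩,
    ⟨hxc, fun hle => hcx ⟨hle, hxc⟩⟩, ?_⟩
  · exact ⟨fun hle => hay (lt_of_le_of_lt_rel htrans hle hcy),
      fun hle => hcx (lt_of_le_of_lt_rel htrans hle hax)⟩
  · exact ⟨fun hle => hay (lt_of_lt_of_le_rel htrans hax hle),
      fun hle => hcx (lt_of_lt_of_le_rel htrans hcy hle)⟩

theorem not_embeds2p2_of_predLe_total (ht : ∀ x y, PredLe le x y ∨ PredLe le y x) :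
    ¬ Embeds2p2 le := by
  rintro ⟨a, b, c, d, hab, hcd, -, had, hbc, -⟩
  rcases ht b d with h | h
  · exact had.1 (h a hab).1
  · exact hbc.2 (h c hcd).1

theorem not_embeds3p1_of_predLe_total (ht : ∀ x y, PredLe le x y ∨ PredLe le y x)
    (hps : ∀ x y, PredLe le x y ↔ SuccLe le x y) : ¬ Embeds3p1 le := by
  rintro ⟨a, b, c, d, hab, hbc, hda, -, hdc⟩
  rcases ht d b with h | h
  · exact hdc.1 ((hps d b).mp h c hbc).1
  · exact hda.2 (h a hab).1

theorem PredEquiv.symm {x y : X} (h : PredEquiv le x y) : PredEquiv le y x := ⟨h.2, h.1⟩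

theorem PredEquiv.trans {x y z : X} (hxy : PredEquiv le x y) (hyz : PredEquiv le y z) :
    PredEquiv le x z :=
  ⟨fun w hw => hyz.1 w (hxy.1 w hw), fun w hw => hxy.2 w (hyz.2 w hw)⟩

theorem PredEquiv.not_lt {x y : X} (h : PredEquiv le x y) : ¬ Lt le x y :=
  fun hxy => lt_irrefl_rel x (h.2 x hxy)

end Relation

section Subtype

variable {le : X → X → Prop} {p : X → Prop}

theorem IsPartialOrderRel.subtype (hpo : IsPartialOrderRel le) :
    IsPartialOrderRel (fun a b : Subtype p => le a b) :=
  ⟨fun x => hpo.1 x, fun x y z => hpo.2.1 x y z,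
    fun x y hxy hyx => Subtype.ext (hpo.2.2 x y hxy hyx)⟩

theorem embeds2p2_of_subtype : Embeds2p2 (fun a b : Subtype p => le a b) → Embeds2p2 le
  | ⟨a, b, c, d, h⟩ => ⟨a, b, c, d, h⟩

theorem embeds3p1_of_subtype : Embeds3p1 (fun a b : Subtype p => le a b) → Embeds3p1 le
  | ⟨a, b, c, d, h⟩ => ⟨a, b, c, d, h⟩

theorem predLe_subtype_iff (htrans : ∀ x y z, le x y → le y z → le x z)
    (hp : ∀ y z, p y → Incomp le y z → p z) {x y : Subtype p} :
    PredLe (fun a b : Subtype p => le a b) x y ↔ PredLe le x y := by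
  refine ⟨fun h z hzx => ?_, fun h z => h z⟩
  by_cases hyz : le y z
  · exact absurd (h y (lt_of_le_of_lt_rel htrans hyz hzx)) (lt_irrefl_rel _)
  by_cases hzy : le z y
  · exact ⟨hzy, hyz⟩
  · exact h ⟨z, hp y z y.2 ⟨hyz, hzy⟩⟩ hzx

end Subtype

section OrderedGroup

variable {G : Type*} [AddGroup G] {le : G → G → Prop}

theorem le_add_left_iff (hc : IsCompat le) (a x y : G) : le (a + x) (a + y) ↔ le x y :=
  ⟨fun h => by simpa [← add_assoc] using hc (-a) 0 _ _ h,
    fun h => by simpa using hc a 0 x y h⟩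

theorem le_add_right_iff (hc : IsCompat le) (a x y : G) : le (x + a) (y + a) ↔ le x y :=
  ⟨fun h => by simpa using hc 0 (-a) _ _ h, fun h => by simpa using hc 0 a x y h⟩

theorem lt_add_left_iff (hc : IsCompat le) (a x y : G) : Lt le (a + x) (a + y) ↔ Lt le x y := by
  simp only [Lt, le_add_left_iff hc]

theorem lt_add_right_iff (hc : IsCompat le) (a x y : G) : Lt le (x + a) (y + a) ↔ Lt le x y := by
  simp only [Lt, le_add_right_iff hc]

theorem incomp_add_left_iff (hc : IsCompat le) (a x y : G) :
    Incomp le (a + x) (a + y) ↔ Incomp le x y := by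
  simp only [Incomp, le_add_left_iff hc]

theorem predLe_add_left_iff (hc : IsCompat le) (a x y : G) :
    PredLe le (a + x) (a + y) ↔ PredLe le x y := by
  refine ⟨fun h z hz => ?_, fun h z hz => ?_⟩
  · exact (lt_add_left_iff hc a z y).1 (h _ ((lt_add_left_iff hc a z x).2 hz))
  · have hz' : Lt le (-a + z) x := (lt_add_left_iff hc a _ x).1 (by simpa using hz)
    simpa using (lt_add_left_iff hc a _ y).2 (h _ hz')

/-- `y < z` gives `x - z + y < x`, and `z < x` gives `y < y - z + x`. -/
theorem predLe_iff_succLe (hc : IsCompat le) (x y : G) : PredLe le x y ↔ SuccLe le x y := by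
  refine ⟨fun h z hyz => ?_, fun h z hzx => ?_⟩
  · have hlt : Lt le (x + -z + y) x := by
      simpa using (lt_add_left_iff hc (x + -z) y z).2 hyz
    have hneg : Lt le (x + -z) 0 := (lt_add_right_iff hc y _ 0).1 (by simpa using h _ hlt)
    simpa using (lt_add_right_iff hc z _ _).2 hneg
  · have hlt : Lt le y (y + -z + x) := by
      simpa using (lt_add_left_iff hc (y + -z) z x).2 hzx
    have hpos : Lt le 0 (y + -z) := (lt_add_right_iff hc x 0 _).1 (by simpa using h _ hlt)
    simpa using (lt_add_right_iff hc z _ _).2 hpos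

theorem PredEquiv.lt_of_lt_left (hc : IsCompat le) {x x' y : G} (h : PredEquiv le x x')
    (hxy : Lt le x y) : Lt le x' y :=
  (predLe_iff_succLe hc x' x).1 h.2 y hxy

theorem semiorder_iff_predLe_total (htrans : ∀ x y z, le x y → le y z → le x z)
    (hc : IsCompat le) :
    (¬ Embeds2p2 le ∧ ¬ Embeds3p1 le) ↔ ∀ x y, PredLe le x y ∨ PredLe le y x :=
  ⟨fun h => predLe_total_of_not_embeds2p2 htrans h.1, fun h =>
    ⟨not_embeds2p2_of_predLe_total h, not_embeds3p1_of_predLe_total h (predLe_iff_succLe hc)⟩⟩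

end OrderedGroup

section Quotient

variable {H : Type*} [AddGroup H] {le : H → H → Prop} {N : AddSubgroup H}

theorem isCompat_imageRel [N.Normal] (hc : IsCompat le) : IsCompat (imageRel N le) := by
  rintro α β - - ⟨x, y, rfl, rfl, hxy⟩
  obtain ⟨a, rfl⟩ := QuotientAddGroup.mk_surjective α
  obtain ⟨b, rfl⟩ := QuotientAddGroup.mk_surjective β
  exact ⟨a + x + b, a + y + b, rfl, rfl, hc a b x y hxy⟩

variable (hN : (N : Set H) = {x | PredLe le x 0 ∧ PredLe le 0 x})
include hN

theorem mk_eq_mk_iff_predEquiv (hc : IsCompat le) {x y : H} :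
    (x : H ⧸ N) = y ↔ PredEquiv le x y := by
  have hyx : PredLe le (-x + y) 0 ↔ PredLe le y x := by
    simpa using predLe_add_left_iff hc (-x) y x
  have hxy : PredLe le 0 (-x + y) ↔ PredLe le x y := by
    simpa using predLe_add_left_iff hc (-x) x y
  rw [QuotientAddGroup.eq, ← SetLike.mem_coe, hN, Set.mem_ofPred_eq, hyx, hxy, PredEquiv,
    and_comm]

theorem imageRel_mk_mk_iff (hpo : IsPartialOrderRel le) (hc : IsCompat le) {x y : H} :
    imageRel N le x y ↔ Lt le x y ∨ PredEquiv le x y := by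
  constructor
  · rintro ⟨u, v, hux, hvy, huv⟩
    rw [mk_eq_mk_iff_predEquiv hN hc] at hux hvy
    by_cases hvu : le v u
    · obtain rfl : u = v := hpo.2.2 _ _ huv hvu
      exact Or.inr (hux.symm.trans hvy)
    · exact Or.inl (hvy.1 x (hux.lt_of_lt_left hc ⟨huv, hvu⟩))
  · rintro (h | h)
    · exact ⟨x, y, rfl, rfl, h.1⟩
    · exact ⟨x, x, rfl, (mk_eq_mk_iff_predEquiv hN hc).2 h, hpo.1 x⟩

theorem lt_imageRel_mk_mk_iff (hpo : IsPartialOrderRel le) (hc : IsCompat le) {x y : H} :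
    Lt (imageRel N le) x y ↔ Lt le x y := by
  simp only [Lt, imageRel_mk_mk_iff hN hpo hc]
  constructor
  · rintro ⟨h | h, hyx⟩
    · exact h
    · exact absurd (Or.inr h.symm) hyx
  · rintro h
    exact ⟨Or.inl h, by rintro (h' | h'); exacts [h.2 h'.1, h'.symm.not_lt h]⟩

theorem predLe_imageRel_mk_mk_iff (hpo : IsPartialOrderRel le) (hc : IsCompat le) {x y : H} :
    PredLe (imageRel N le) x y ↔ PredLe le x y := by
  refine ⟨fun h z hz => ?_, fun h ζ hζ => ?_⟩
  · exact (lt_imageRel_mk_mk_iff hN hpo hc).1 (h z ((lt_imageRel_mk_mk_iff hN hpo hc).2 hz))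
  · obtain ⟨z, rfl⟩ := QuotientAddGroup.mk_surjective ζ
    exact (lt_imageRel_mk_mk_iff hN hpo hc).2 (h z ((lt_imageRel_mk_mk_iff hN hpo hc).1 hζ))

theorem isPartialOrderRel_imageRel (hpo : IsPartialOrderRel le) (hc : IsCompat le) :
    IsPartialOrderRel (imageRel N le) := by
  refine ⟨fun α => ?_, fun α β γ => ?_, fun α β => ?_⟩
  · induction α using QuotientAddGroup.induction_on
    exact ⟨_, _, rfl, rfl, hpo.1 _⟩
  · induction α using QuotientAddGroup.induction_on
    induction β using QuotientAddGroup.induction_on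
    induction γ using QuotientAddGroup.induction_on
    simp only [imageRel_mk_mk_iff hN hpo hc]
    rintro (hxy | hxy) (hyz | hyz)
    exacts [Or.inl (lt_of_lt_of_le_rel hpo.2.1 hxy hyz.1), Or.inl (hyz.1 _ hxy),
      Or.inl (hxy.symm.lt_of_lt_left hc hyz), Or.inr (hxy.trans hyz)]
  · induction α using QuotientAddGroup.induction_on
    induction β using QuotientAddGroup.induction_on
    simp only [imageRel_mk_mk_iff hN hpo hc, mk_eq_mk_iff_predEquiv hN hc]
    rintro (hxy | hxy) (hyx | hyx)
    exacts [absurd hyx.1 hxy.2, absurd hxy hyx.symm.not_lt, hxy, hxy]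

theorem isThresholdGroup_quotient_iff [N.Normal] (hpo : IsPartialOrderRel le)
    (hc : IsCompat le) :
    IsThresholdGroup (H ⧸ N) (imageRel N le) ↔ ∀ x y, PredLe le x y ∨ PredLe le y x := by
  constructor
  · intro h x y
    simpa only [predLe_imageRel_mk_mk_iff hN hpo hc] using h.2.2.2.1 (x : H ⧸ N) y
  · intro htotal
    refine ⟨isPartialOrderRel_imageRel hN hpo hc, isCompat_imageRel hc,
      predLe_iff_succLe (isCompat_imageRel hc), fun α β => ?_, fun α β => ?_⟩ <;>
    induction α using QuotientAddGroup.induction_on <;>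
    induction β using QuotientAddGroup.induction_on
    · simpa only [predLe_imageRel_mk_mk_iff hN hpo hc] using htotal _ _
    · simp only [predLe_imageRel_mk_mk_iff hN hpo hc, mk_eq_mk_iff_predEquiv hN hc]
      exact And.intro

end Quotient

section Component

variable {G : Type*} [AddGroup G] {le : G → G → Prop}

theorem isCompat_addSubgroup (hc : IsCompat le) (I : AddSubgroup G) :
    IsCompat (fun a b : I => le (a : G) (b : G)) :=
  fun a b x y h => by simpa using hc a b x y h

variable {I : AddSubgroup G}
variable (hI : (I : Set G) = {x | Relation.ReflTransGen (fun a b => Incomp le a b) 0 x})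
include hI

theorem mem_of_incomp {y z : G} (hy : y ∈ I) (h : Incomp le y z) : z ∈ I := by
  rw [← SetLike.mem_coe, hI] at hy ⊢
  exact hy.tail h

theorem embeds2p2_component_iff (hc : IsCompat le) :
    Embeds2p2 (fun a b : I => le (a : G) (b : G)) ↔ Embeds2p2 le := by
  refine ⟨embeds2p2_of_subtype, ?_⟩
  rintro ⟨a, b, c, d, hab, hcd, hac, had, hbc, hbd⟩
  have lt_tr {x y : G} : Lt le x y → Lt le (-a + x) (-a + y) := (lt_add_left_iff hc _ _ _).2
  have incomp_tr {x y : G} : Incomp le x y → Incomp le (-a + x) (-a + y) :=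
    (incomp_add_left_iff hc _ _ _).2
  have ha : -a + a ∈ I := by rw [neg_add_cancel]; exact I.zero_mem
  have hc' : -a + c ∈ I := mem_of_incomp hI ha (incomp_tr hac)
  have hd' : -a + d ∈ I := mem_of_incomp hI ha (incomp_tr had)
  have hb' : -a + b ∈ I := mem_of_incomp hI hc' (incomp_tr hbc).symm
  exact ⟨⟨_, ha⟩, ⟨_, hb'⟩, ⟨_, hc'⟩, ⟨_, hd'⟩, lt_tr hab, lt_tr hcd,
    incomp_tr hac, incomp_tr had, incomp_tr hbc, incomp_tr hbd⟩

theorem embeds3p1_component_iff (hc : IsCompat le) :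
    Embeds3p1 (fun a b : I => le (a : G) (b : G)) ↔ Embeds3p1 le := by
  refine ⟨embeds3p1_of_subtype, ?_⟩
  rintro ⟨a, b, c, d, hab, hbc, hda, hdb, hdc⟩
  have lt_tr {x y : G} : Lt le x y → Lt le (-d + x) (-d + y) := (lt_add_left_iff hc _ _ _).2
  have incomp_tr {x y : G} : Incomp le x y → Incomp le (-d + x) (-d + y) :=
    (incomp_add_left_iff hc _ _ _).2
  have hd : -d + d ∈ I := by rw [neg_add_cancel]; exact I.zero_mem
  have ha' := mem_of_incomp hI hd (incomp_tr hda)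
  have hb' := mem_of_incomp hI hd (incomp_tr hdb)
  have hc' := mem_of_incomp hI hd (incomp_tr hdc)
  exact ⟨⟨_, ha'⟩, ⟨_, hb'⟩, ⟨_, hc'⟩, ⟨_, hd⟩, lt_tr hab, lt_tr hbc,
    incomp_tr hda, incomp_tr hdb, incomp_tr hdc⟩

theorem coe_addSubgroupOf_eq_of_component {K : AddSubgroup G}
    (htrans : ∀ x y z, le x y → le y z → le x z)
    (hK : (K : Set G) = {x | PredLe le x 0 ∧ PredLe le 0 x}) :
    (K.addSubgroupOf I : Set I) = {x | PredLe (fun a b : I => le (a : G) (b : G)) x 0 ∧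
      PredLe (fun a b : I => le (a : G) (b : G)) 0 x} := by
  ext x
  rw [SetLike.mem_coe, AddSubgroup.mem_addSubgroupOf, ← SetLike.mem_coe, hK]
  simp only [Set.mem_ofPred_eq, predLe_subtype_iff htrans (fun _ _ => mem_of_incomp hI),
    ZeroMemClass.coe_zero]

end Component

/-- For an ordered group `G`, with `K = K(G)` and `I = I(G)(0)`:
the order is a semiorder iff `I(G)(0)/K(G)` (with the image order) is a threshold group
iff `G/K(G)` (with the image order) is a threshold group. -/
theorem semiorder_iff_quotient_threshold {G : Type*} [AddGroup G] (le : G → G → Prop)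
    (hpo : IsPartialOrderRel le) (hc : IsCompat le)
    (K I : AddSubgroup G)
    (hK : (K : Set G) = {x : G | PredLe le x 0 ∧ PredLe le 0 x})
    (hI : (I : Set G) = {x : G | Relation.ReflTransGen (fun a b => Incomp le a b) 0 x})
    [K.Normal] [(K.addSubgroupOf I).Normal] :
    ((¬ Embeds2p2 le ∧ ¬ Embeds3p1 le) ↔
      IsThresholdGroup (↥I ⧸ K.addSubgroupOf I)
        (imageRel (K.addSubgroupOf I) (fun a b : I => le (a : G) (b : G)))) ∧
    ((¬ Embeds2p2 le ∧ ¬ Embeds3p1 le) ↔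
      IsThresholdGroup (G ⧸ K) (imageRel K le)) := by
  have hpoI : IsPartialOrderRel (fun a b : I => le (a : G) (b : G)) := hpo.subtype
  have hcI := isCompat_addSubgroup hc I
  have hKI := coe_addSubgroupOf_eq_of_component hI hpo.2.1 hK
  refine ⟨?_, ?_⟩
  · rw [← embeds2p2_component_iff hI hc, ← embeds3p1_component_iff hI hc,
      semiorder_iff_predLe_total hpoI.2.1 hcI, isThresholdGroup_quotient_iff hKI hpoI hcI]
  · rw [semiorder_iff_predLe_total hpo.2.1 hc, isThresholdGroup_quotient_iff hK hpo hc]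

end ThrPaper
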